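/- arXiv:2301.02085 — 3 statements merged into one kernel-verified Lean document; each statement's English description precedes it below -/
import Mathlib

section
/- Let p and q be coprime integers with 0 < q < p. Then ‖q/p‖ = ‖(p−q)/p‖; that is, the sum of the coefficients of the continued fraction expansion of q/p (produced by the floor algorithm) equals the sum of the coefficients of the continued fraction expansion of (p−q)/p. -/
/-- The sum of the successive quotients arising in the Euclidean algorithm applied
to the pair `(a, b)`; for a rational `a / b` these quotients are exactly the
coefficients of its continued fraction expansion produced by the floor algorithm. -/
def euclidQuotSum : ℕ → ℕ → ℕ
  | _, 0 => 0
  | a, (b + 1) => a / (b + 1) + euclidQuotSum (b + 1) (a % (b + 1))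
termination_by a b => b
decreasing_by exact Nat.mod_lt _ (Nat.succ_pos b)

/-- `‖x‖`: the sum of the coefficients of the continued fraction expansion
(produced by the floor algorithm) of the positive rational `x`, i.e. the sum of
the successive quotients of the Euclidean algorithm applied to its numerator
and denominator. -/
def cfCoeffSum (x : ℚ) : ℕ := euclidQuotSum x.num.natAbs x.den

/-!
Since `q < p`, both expansions start with the quotient `0`, so `‖q/p‖` and `‖(p-q)/p‖` are the
quotient sums of the Euclidean algorithm on `(p, q)` and on `(p, p - q)`. Write `p = a + b` with
`a < b`. The pair `(a + b, b)` yields the quotient `1` and passes to `(b, a)`; the pair `(a + b, a)`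
differs from `(b, a)` only in that its first quotient is larger by `1`. Hence both quotient sums
equal `euclidQuotSum b a + 1`.
-/

lemma euclidQuotSum_eq_of_ne_zero {a b : ℕ} (hb : b ≠ 0) :
    euclidQuotSum a b = a / b + euclidQuotSum b (a % b) := by
  obtain ⟨b, rfl⟩ := Nat.exists_eq_succ_of_ne_zero hb
  rw [euclidQuotSum]

lemma euclidQuotSum_of_lt {a b : ℕ} (h : a < b) : euclidQuotSum a b = euclidQuotSum b a := by
  rw [euclidQuotSum_eq_of_ne_zero (by omega), Nat.div_eq_of_lt h, Nat.mod_eq_of_lt h, zero_add]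

lemma euclidQuotSum_add_self_left {a b : ℕ} (hb : b ≠ 0) :
    euclidQuotSum (a + b) b = euclidQuotSum a b + 1 := by
  rw [euclidQuotSum_eq_of_ne_zero hb, euclidQuotSum_eq_of_ne_zero hb,
    Nat.add_div_right _ (Nat.pos_of_ne_zero hb), Nat.add_mod_right]
  ring

lemma euclidQuotSum_add_right_eq_of_lt {a b : ℕ} (ha : a ≠ 0) (h : a < b) :
    euclidQuotSum (a + b) b = euclidQuotSum (a + b) a := by
  rw [euclidQuotSum_add_self_left (by omega), euclidQuotSum_of_lt h, add_comm a b,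
    euclidQuotSum_add_self_left ha]

lemma euclidQuotSum_add_left_eq_add_right {a b : ℕ} (ha : a ≠ 0) (hb : b ≠ 0) :
    euclidQuotSum (a + b) a = euclidQuotSum (a + b) b := by
  rcases lt_trichotomy a b with h | rfl | h
  · exact (euclidQuotSum_add_right_eq_of_lt ha h).symm
  · rfl
  · rw [add_comm, euclidQuotSum_add_right_eq_of_lt hb h]

lemma cfCoeffSum_natCast_div {a b : ℕ} (hb : 0 < b) (h : a.Coprime b) :
    cfCoeffSum ((a : ℚ) / b) = euclidQuotSum a b := by
  have hb' : (0 : ℤ) < b := by exact_mod_cast hb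
  have h' : (a : ℤ).natAbs.Coprime (b : ℤ).natAbs := h
  have hnum := Rat.num_div_eq_of_coprime hb' h'
  have hden := Rat.den_div_eq_of_coprime hb' h'
  push_cast at hnum hden
  rw [cfCoeffSum, hnum, Int.natAbs_natCast, Nat.cast_inj.mp hden]

theorem cfCoeffSum_sub_eq (p q : ℤ) (hcop : IsCoprime p q)
    (hq : 0 < q) (hqp : q < p) :
    cfCoeffSum ((q : ℚ) / (p : ℚ)) = cfCoeffSum (((p : ℚ) - (q : ℚ)) / (p : ℚ)) := by
  lift q to ℕ using hq.le
  lift p to ℕ using (hq.trans hqp).le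
  obtain ⟨r, rfl⟩ := Nat.exists_eq_add_of_le (Int.ofNat_lt.mp hqp).le
  have hq₀ : q ≠ 0 := by omega
  have hr₀ : r ≠ 0 := by omega
  have hqr : q.Coprime r :=
    Nat.coprime_self_add_right.mp (Int.isCoprime_iff_nat_coprime.mp hcop).symm
  have hsub : ((q + r : ℕ) : ℚ) - q = r := by push_cast; ring
  simp only [Int.cast_natCast, hsub]
  calc cfCoeffSum ((q : ℚ) / (q + r : ℕ))
      = euclidQuotSum q (q + r) :=
        cfCoeffSum_natCast_div (by omega) (Nat.coprime_self_add_right.mpr hqr)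
    _ = euclidQuotSum (q + r) q := euclidQuotSum_of_lt (by omega)
    _ = euclidQuotSum (q + r) r := euclidQuotSum_add_left_eq_add_right hq₀ hr₀
    _ = euclidQuotSum r (q + r) := (euclidQuotSum_of_lt (by omega)).symm
    _ = cfCoeffSum ((r : ℚ) / (q + r : ℕ)) :=
        (cfCoeffSum_natCast_div (by omega) (Nat.coprime_add_self_right.mpr hqr.symm)).symm
end

section
/- Fix natural numbers g, n, b with b ≥ 1, an integer e, and for each i = 1, …, n integers p_i ≥ 1 and q_i. Let G be the group with generators x_1, y_1, …, x_g, y_g, c_1, …, c_n, d_1, …, d_b, h and relators: h commutes with every generator; c_i^{p_i} h^{q_i} = 1 for each i = 1, …, n; and [x_1, y_1]⋯[x_g, y_g] · c_1⋯c_n · d_1⋯d_b · h^e = 1. Then there exists a surjective group homomorphism from G onto the free abelian group ℤ^{2g+b}. (This is the algebraic content of the lower bound lemma: the fundamental group of a Seifert fibered space over an orientable base surface Σ of genus g with b ≥ 1 boundary components has abelianization with a free summand of rank 2g + b = |2 − χ(Σ)|.) -/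
/-- Generators of the standard presentation of the fundamental group of a Seifert
fibered space over an orientable base of genus `g`, with `n` singular fibres and
`b` boundary components: `x₁, y₁, …, x_g, y_g, c₁, …, c_n, d₁, …, d_b, h`. -/
inductive SFSGen (g n b : ℕ) : Type
  | x : Fin g → SFSGen g n b
  | y : Fin g → SFSGen g n b
  | c : Fin n → SFSGen g n b
  | d : Fin b → SFSGen g n b
  | h : SFSGen g n b

open FreeGroup
open scoped commutatorElement

/-- The relators: `h` commutes with every generator; `cᵢ^{pᵢ} h^{qᵢ} = 1`;
and `[x₁,y₁]⋯[x_g,y_g] · c₁⋯c_n · d₁⋯d_b · h^e = 1`. -/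
def sfsRels (g n b : ℕ) (e : ℤ) (p q : Fin n → ℤ) :
    Set (FreeGroup (SFSGen g n b)) :=
  (Set.range fun a : SFSGen g n b => ⁅of (SFSGen.h : SFSGen g n b), of a⁆) ∪
  (Set.range fun i : Fin n =>
      of (SFSGen.c i : SFSGen g n b) ^ p i * of (SFSGen.h : SFSGen g n b) ^ q i) ∪
  { (List.ofFn fun i : Fin g =>
        ⁅of (SFSGen.x i : SFSGen g n b), of (SFSGen.y i : SFSGen g n b)⁆).prod *
    (List.ofFn fun i : Fin n => of (SFSGen.c i : SFSGen g n b)).prod *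
    (List.ofFn fun k : Fin b => of (SFSGen.d k : SFSGen g n b)).prod *
    of (SFSGen.h : SFSGen g n b) ^ e }

/-! After abelianizing, `h` and the `cᵢ` span `A = ⟨h, cᵢ | pᵢ cᵢ + qᵢ h = 0⟩`, which maps onto `ℤ`
because the `pᵢ` are nonzero: a solution `(t, aᵢ)` of `pᵢ aᵢ + qᵢ t = 0` with `t ≠ 0`, divided by
its content, is primitive, so `h ↦ t`, `cᵢ ↦ aᵢ` is onto. Since `b ≥ 1`, the long relator can be
solved for one boundary generator `d_{k₀}`, whose coordinate is then free to carry `A`; the `xᵢ`,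
`yᵢ` and remaining `dₖ` go to the other basis vectors of `ℤ^{2g+b}`. -/

open Finset in
theorem Int.exists_gcd_eq_one_solution {ι : Type*} [Fintype ι] (p q : ι → ℤ)
    (hp : ∀ i, p i ≠ 0) :
    ∃ a : Option ι → ℤ, (∀ i, p i * a (some i) + q i * a none = 0) ∧ univ.gcd a = 1 := by
  classical
  -- `none ↦ ∏ pⱼ`, `some i ↦ -qᵢ ∏_{j ≠ i} pⱼ` is a solution; `extract_gcd` divides out its content.
  let f : Option ι → ℤ := fun o => o.elim (∏ j, p j) fun i => -q i * ∏ j ∈ univ.erase i, p j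
  obtain ⟨a, hfa, ha⟩ := extract_gcd f univ_nonempty
  have hf : univ.gcd f ≠ 0 := fun h0 =>
    prod_ne_zero_iff.mpr (fun j _ => hp j) (Finset.gcd_eq_zero_iff.mp h0 none (mem_univ _))
  refine ⟨a, fun i => mul_left_cancel₀ hf ?_, ha⟩
  have hsol : p i * f (some i) + q i * f none = 0 := by
    simp only [f, Option.elim, ← mul_prod_erase univ p (mem_univ i)]
    ring
  rw [hfa _ (mem_univ _), hfa _ (mem_univ _)] at hsol
  linear_combination hsol

theorem AddSubgroup.eq_top_of_forall_single_one_mem {ι : Type*} [Fintype ι] [DecidableEq ι]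
    {S : AddSubgroup (ι → ℤ)} (h : ∀ i, Pi.single i 1 ∈ S) : S = ⊤ := by
  refine eq_top_iff.mpr fun v _ => ?_
  rw [← Finset.univ_sum_single v]
  refine S.sum_mem fun i _ => ?_
  simpa [← Pi.single_smul] using S.zsmul_mem (h i) (v i)

section
variable {g n b : ℕ}

theorem lift_ofAdd_sfsRels_eq_one {e : ℤ} {p q : Fin n → ℤ} {V : Type*} [AddCommGroup V]
    {v : SFSGen g n b → V}
    (hc : ∀ i, p i • v (.c i) + q i • v .h = 0)
    (hsum : ∑ i, v (.c i) + ∑ k, v (.d k) + e • v .h = 0) :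
    ∀ r ∈ sfsRels g n b e p q, FreeGroup.lift (Multiplicative.ofAdd ∘ v) r = 1 := by
  have hcomm (x y : Multiplicative V) : ⁅x, y⁆ = 1 :=
    commutatorElement_eq_one_iff_commute.mpr (Commute.all x y)
  rintro r ((⟨s, rfl⟩ | ⟨i, rfl⟩) | rfl)
  · rw [map_commutatorElement, hcomm]
  · simpa [← ofAdd_zsmul, ← ofAdd_add] using hc i
  · simpa [map_list_prod, List.prod_ofFn, map_commutatorElement, hcomm, ← ofAdd_sum,
      ← ofAdd_zsmul, ← ofAdd_add] using hsum

def sfsGenImage (k₀ : Fin b) (e : ℤ) (a : Option (Fin n) → ℤ) :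
    SFSGen g n b → (Fin g ⊕ Fin g ⊕ Fin b → ℤ)
  | .x i => Pi.single (.inl i) 1
  | .y i => Pi.single (.inr (.inl i)) 1
  | .c i => a (some i) • Pi.single (.inr (.inr k₀)) 1
  | .h => a none • Pi.single (.inr (.inr k₀)) 1
  | .d k => Pi.single (.inr (.inr k)) 1 + if k = k₀ then
      -(∑ k', Pi.single (.inr (.inr k')) 1) -
        (∑ i, a (some i) + e * a none) • Pi.single (.inr (.inr k₀)) 1 else 0

theorem sfs_exists_surjective_of_gcd_eq_one (k₀ : Fin b) (e : ℤ) {p q : Fin n → ℤ}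
    {a : Option (Fin n) → ℤ} (ha : ∀ i, p i * a (some i) + q i * a none = 0)
    (hgcd : Finset.univ.gcd a = 1) :
    ∃ φ : PresentedGroup (sfsRels g n b e p q) →* Multiplicative (Fin g ⊕ Fin g ⊕ Fin b → ℤ),
      Function.Surjective φ := by
  set v : SFSGen g n b → (Fin g ⊕ Fin g ⊕ Fin b → ℤ) := sfsGenImage k₀ e a
  have hc (i : Fin n) : p i • v (.c i) + q i • v .h = 0 := by
    simp only [v, sfsGenImage, smul_smul, ← add_smul, ha, zero_smul]
  have hsum : ∑ i, v (.c i) + ∑ k, v (.d k) + e • v .h = 0 := by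
    simp only [v, sfsGenImage, Finset.sum_add_distrib, Finset.sum_ite_eq', Finset.mem_univ,
      if_true, ← Finset.sum_smul]
    module
  let φ := PresentedGroup.toGroup (lift_ofAdd_sfsRels_eq_one hc hsum)
  refine ⟨φ, MonoidHom.range_eq_top.mp ?_⟩
  set R := φ.range.toAddSubgroup'
  have hR (s : SFSGen g n b) : v s ∈ R := ⟨.of s, PresentedGroup.toGroup.of _⟩
  have hk₀ : Pi.single (.inr (.inr k₀)) 1 ∈ R := by
    obtain ⟨w, hw⟩ := Finset.gcd_eq_sum_mul Finset.univ a
    rw [hgcd] at hw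
    have hbezout : ∑ o, w o • a o • Pi.single (.inr (.inr k₀)) 1 =
        (Pi.single (.inr (.inr k₀)) 1 : Fin g ⊕ Fin g ⊕ Fin b → ℤ) := by
      simp only [smul_smul, ← Finset.sum_smul, mul_comm (w _), ← hw, one_smul]
    rw [← hbezout]
    refine R.sum_mem fun o _ => R.zsmul_mem ?_ _
    cases o with
    | none => exact hR .h
    | some i => exact hR (.c i)
  have hall : R = ⊤ := by
    refine AddSubgroup.eq_top_of_forall_single_one_mem ?_
    rintro (i | i | k)
    · exact hR (.x i)
    · exact hR (.y i)
    · by_cases hk : k = k₀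
      · exact hk ▸ hk₀
      · simpa [v, sfsGenImage, hk] using hR (.d k)
  exact Subgroup.toAddSubgroup'.injective (hall.trans (OrderIso.map_top _).symm)
end

/-- The fundamental group of a Seifert fibered space over an orientable genus-`g`
base with `b ≥ 1` boundary components surjects onto the free abelian group of
rank `2g + b`. -/
theorem sfs_pi1_surjects_onto_free_abelian
    (g n b : ℕ) (hb : 1 ≤ b) (e : ℤ) (p q : Fin n → ℤ) (hp : ∀ i, 1 ≤ p i) :
    ∃ φ : PresentedGroup (sfsRels g n b e p q) →*
        Multiplicative (Fin (2 * g + b) → ℤ),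
      Function.Surjective φ := by
  obtain ⟨a, ha, hgcd⟩ := Int.exists_gcd_eq_one_solution p q fun i => (one_pos.trans_le (hp i)).ne'
  obtain ⟨φ, hφ⟩ := sfs_exists_surjective_of_gcd_eq_one ⟨0, hb⟩ e ha hgcd (g := g)
  let σ : (Fin g ⊕ Fin g ⊕ Fin b) ≃ Fin (2 * g + b) :=
    Fintype.equivFinOfCardEq (by simp only [Fintype.card_sum, Fintype.card_fin]; ring)
  let ψ := (LinearEquiv.funCongrLeft ℤ ℤ σ.symm).toAddEquiv.toMultiplicative
  exact ⟨ψ.toMonoidHom.comp φ, ψ.surjective.comp hφ⟩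
end

section
/- Fix natural numbers a, n, b with a ≥ 1 and b ≥ 1, an integer e, and for each i = 1, …, n integers p_i ≥ 1 and q_i. Let G be the group with generators z_1, …, z_a, c_1, …, c_n, d_1, …, d_b, h and relators: z_j h z_j⁻¹ h = 1 for each j = 1, …, a (i.e. conjugation by each z_j inverts h); h commutes with each c_i and each d_k; c_i^{p_i} h^{q_i} = 1 for each i = 1, …, n; and z_1²⋯z_a² · c_1⋯c_n · d_1⋯d_b · h^e = 1. Then there exists a surjective group homomorphism from G onto the free abelian group ℤ^{a+b−1}. (This is the algebraic content of the lower bound lemma in the nonorientable case: the fundamental group of a Seifert fibered space over a nonorientable base surface Σ with a crosscaps and b ≥ 1 boundary components has abelianization with a free summand of rank a + b − 1 = |1 − χ(Σ)|.) -/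
/-!
Sending `h` and every `cᵢ` to zero, each relator of an abelian quotient becomes trivial except
the last, which reads `2 ∑ zⱼ + ∑ dₖ = 0`. Solving it for `d_b` leaves `z₁, …, z_a, d₁, …, d_{b-1}`
free, so they can be sent to the standard basis of `ℤ^{a+b-1}`.
-/

/-- Generators of the standard presentation of the fundamental group of a Seifert
fibered space over a nonorientable base with `a` crosscaps, `n` singular fibres
and `b` boundary components: `z₁, …, z_a, c₁, …, c_n, d₁, …, d_b, h`. -/
inductive SFSGenN (a n b : ℕ) : Type
  | z : Fin a → SFSGenN a n b
  | c : Fin n → SFSGenN a n b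
  | d : Fin b → SFSGenN a n b
  | h : SFSGenN a n b

open FreeGroup
open scoped commutatorElement

/-- The relators: `z_j h z_j⁻¹ h = 1` for each `j` (conjugation by `z_j` inverts
`h`); `h` commutes with each `cᵢ` and each `d_k`; `cᵢ^{pᵢ} h^{qᵢ} = 1`; and
`z₁²⋯z_a² · c₁⋯c_n · d₁⋯d_b · h^e = 1`. -/
def sfsRelsN (a n b : ℕ) (e : ℤ) (p q : Fin n → ℤ) :
    Set (FreeGroup (SFSGenN a n b)) :=
  (Set.range fun j : Fin a =>
      of (SFSGenN.z j : SFSGenN a n b) * of (SFSGenN.h : SFSGenN a n b) *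
        (of (SFSGenN.z j : SFSGenN a n b))⁻¹ * of (SFSGenN.h : SFSGenN a n b)) ∪
  (Set.range fun i : Fin n =>
      ⁅of (SFSGenN.h : SFSGenN a n b), of (SFSGenN.c i : SFSGenN a n b)⁆) ∪
  (Set.range fun k : Fin b =>
      ⁅of (SFSGenN.h : SFSGenN a n b), of (SFSGenN.d k : SFSGenN a n b)⁆) ∪
  (Set.range fun i : Fin n =>
      of (SFSGenN.c i : SFSGenN a n b) ^ p i * of (SFSGenN.h : SFSGenN a n b) ^ q i) ∪
  { (List.ofFn fun j : Fin a => of (SFSGenN.z j : SFSGenN a n b) ^ 2).prod *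
    (List.ofFn fun i : Fin n => of (SFSGenN.c i : SFSGenN a n b)).prod *
    (List.ofFn fun k : Fin b => of (SFSGenN.d k : SFSGenN a n b)).prod *
    of (SFSGenN.h : SFSGenN a n b) ^ e }

theorem MonoidHom.surjective_of_single_mem_range {G ι : Type*} [Group G] [Fintype ι]
    [DecidableEq ι] (φ : G →* Multiplicative (ι → ℤ))
    (h : ∀ i, Multiplicative.ofAdd (Pi.single i 1) ∈ φ.range) : Function.Surjective φ := by
  intro y
  have hy : y = ∏ i, Multiplicative.ofAdd (Pi.single i (1 : ℤ)) ^ y.toAdd i := by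
    simp only [← ofAdd_zsmul, ← ofAdd_sum, ← Pi.single_smul, smul_eq_mul, mul_one,
      Finset.univ_sum_single]
    rfl
  rw [hy]
  exact Subgroup.prod_mem _ fun i _ => Subgroup.zpow_mem _ (h i) _

section

variable {a n b : ℕ} {e : ℤ} {p q : Fin n → ℤ} {A : Type*} [AddCommGroup A]

theorem lift_sfsRelsN_eq_one (f : SFSGenN a n b → A) (hh : f .h + f .h = 0)
    (hc : ∀ i, p i • f (.c i) + q i • f .h = 0)
    (hrel : ∑ j, 2 • f (.z j) + ∑ i, f (.c i) + ∑ k, f (.d k) + e • f .h = 0) :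
    ∀ r ∈ sfsRelsN a n b e p q, lift (Multiplicative.ofAdd ∘ f) r = 1 := by
  intro r hr
  simp only [sfsRelsN, Set.mem_union, Set.mem_range, Set.mem_singleton_iff] at hr
  apply Multiplicative.toAdd.injective
  rcases hr with ((((⟨j, rfl⟩ | ⟨i, rfl⟩) | ⟨k, rfl⟩) | ⟨i, rfl⟩) | rfl)
  · simpa [add_comm] using hh
  · simp [commutatorElement_def]
  · simp [commutatorElement_def]
  · simpa using hc i
  · simpa [map_list_prod, List.map_ofFn, Function.comp_def, List.prod_ofFn, toAdd_prod]
      using hrel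

theorem exists_hom_sfs_of_images (fz : Fin a → A) (fd : Fin b → A) :
    ∃ φ : PresentedGroup (sfsRelsN a n (b + 1) e p q) →* Multiplicative A,
      (∀ j, φ (PresentedGroup.of (.z j)) = .ofAdd (fz j)) ∧
        ∀ k, φ (PresentedGroup.of (.d k.castSucc)) = .ofAdd (fd k) := by
  let f : SFSGenN a n (b + 1) → A
    | .z j => fz j
    | .d k => Fin.lastCases (-(∑ j, 2 • fz j + ∑ k, fd k)) fd k
    | _ => 0
  have hrel : ∑ j, 2 • f (.z j) + ∑ i, f (.c i) + ∑ k, f (.d k) + e • f .h = 0 := by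
    simp [f, Fin.sum_univ_castSucc]
  refine ⟨PresentedGroup.toGroup (lift_sfsRelsN_eq_one f (by simp [f]) (by simp [f]) hrel),
    fun j => ?_, fun k => ?_⟩ <;> simp [f]

end

theorem sfs_pi1_surjects_onto_free_abelian_nonorientable_general
    (a n b : ℕ) (hb : 1 ≤ b) (e : ℤ) (p q : Fin n → ℤ) :
    ∃ φ : PresentedGroup (sfsRelsN a n b e p q) →*
        Multiplicative (Fin (a + b - 1) → ℤ),
      Function.Surjective φ := by
  obtain ⟨b, rfl⟩ : ∃ m, b = m + 1 := ⟨b - 1, by omega⟩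
  rw [Nat.add_succ_sub_one]
  obtain ⟨φ, hz, hd⟩ := exists_hom_sfs_of_images (n := n) (e := e) (p := p) (q := q)
    (A := Fin (a + b) → ℤ) (fun j => Pi.single (Fin.castAdd b j) 1)
    (fun k => Pi.single (Fin.natAdd a k) 1)
  refine ⟨φ, φ.surjective_of_single_mem_range fun i => ?_⟩
  induction i using Fin.addCases with
  | left j => exact ⟨_, hz j⟩
  | right k => exact ⟨_, hd k⟩

/-- The fundamental group of a Seifert fibered space over a nonorientable base
with `a ≥ 1` crosscaps and `b ≥ 1` boundary components surjects onto the free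
abelian group of rank `a + b - 1`. -/
theorem sfs_pi1_surjects_onto_free_abelian_nonorientable
    (a n b : ℕ) (ha : 1 ≤ a) (hb : 1 ≤ b) (e : ℤ) (p q : Fin n → ℤ)
    (hp : ∀ i, 1 ≤ p i) :
    ∃ φ : PresentedGroup (sfsRelsN a n b e p q) →*
        Multiplicative (Fin (a + b - 1) → ℤ),
      Function.Surjective φ :=
  sfs_pi1_surjects_onto_free_abelian_nonorientable_general a n b hb e p q
end
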